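/- arXiv:0711.0908 — 3 statements merged into one kernel-verified Lean document; each statement's English description precedes it below -/
import Mathlib

section
/- Let n ≥ 1, m ≥ 1, let S be any subset of ℚ[x_1,…,x_n], let φ_m be the ℚ-algebra endomorphism of ℚ[x_1,…,x_n] sending x_i to x_i^m for each i, and let I be the ideal generated by {φ_m(Q) : Q ∈ S}. Then for every nonzero P ∈ I there exists a nonzero Q in the ideal ⟨S⟩ such that m·deg_lex(Q) ≤ deg_lex(P) componentwise, i.e., the monomial X^{m·deg_lex(Q)} divides the lex-leading monomial of P. -/
/-!
For an offset `r` with `r i < m`, the linear map `contract m r : ∑ a_ν X^ν ↦ ∑ a_{m ν + r} X^ν`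
satisfies `contract (c * expand m q) = contract c * q`, since multiplying by `X^{m μ}` shifts
exponents inside a single residue class mod `m`. Hence it maps `⟨expand m '' S⟩` into `⟨S⟩`.
Taking `r = δ % m` for the lex-leading exponent `δ` of `P`, the coefficients of `contract P` are
those of `P` along `m ν + r`, and `ν ↦ m ν + r` is lex-monotone, so `contract P` has lex-leading
exponent `δ / m`.
-/

open MvPolynomial

/-- Lexicographic order on exponent vectors: `ν ≤ μ` iff `ν = μ` or the first entry where
they differ is smaller in `ν` (i.e. the first nonzero entry of `μ - ν` is positive). -/
def LexLE {n : ℕ} (ν μ : Fin n → ℕ) : Prop :=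
  ν = μ ∨ ∃ i : Fin n, (∀ j : Fin n, j < i → ν j = μ j) ∧ ν i < μ i

/-- `δ` is the exponent vector of the lex-leading monomial of `P`. -/
def IsLexLeading {n : ℕ} (P : MvPolynomial (Fin n) ℚ) (δ : Fin n → ℕ) : Prop :=
  P.coeff (Finsupp.equivFunOnFinite.symm δ) ≠ 0 ∧
  ∀ ν : Fin n → ℕ, P.coeff (Finsupp.equivFunOnFinite.symm ν) ≠ 0 → LexLE ν δ

namespace Finsupp

variable {σ : Type*} {m : ℕ}

theorem smul_add_injective (hm : 0 < m) (r : σ →₀ ℕ) :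
    Function.Injective fun ν : σ →₀ ℕ => m • ν + r := fun _ _ h =>
  smul_right_injective _ hm.ne' (add_right_cancel h)

theorem smul_le_smul_add_iff {r : σ →₀ ℕ} (hr : ∀ i, r i < m) {μ ν : σ →₀ ℕ} :
    m • μ ≤ m • ν + r ↔ μ ≤ ν := by
  simp only [le_def, add_apply, smul_apply, smul_eq_mul]
  refine forall_congr' fun i => ⟨fun h => ?_, fun h => le_add_right (Nat.mul_le_mul_left m h)⟩
  have hlt : m * μ i < m * (ν i + 1) := h.trans_lt (by have := hr i; rw [Nat.mul_succ]; omega)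
  exact Nat.lt_succ_iff.mp (Nat.lt_of_mul_lt_mul_left hlt)

end Finsupp

namespace MvPolynomial

variable {σ R : Type*} [CommSemiring R]

variable (R) in
/-- `∑ a_ν X^ν ↦ ∑ a_{m ν + r} X^ν`; for `r = 0` a left inverse of `expand m`. -/
noncomputable def contract (m : ℕ) (hm : 0 < m) (r : σ →₀ ℕ) :
    MvPolynomial σ R →ₗ[R] MvPolynomial σ R :=
  (AddMonoidAlgebra.coeffLinearEquiv R).symm.toLinearMap ∘ₗ
    Finsupp.lcomapDomain _ (Finsupp.smul_add_injective hm r) ∘ₗ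
      (AddMonoidAlgebra.coeffLinearEquiv R).toLinearMap

variable {m : ℕ} {hm : 0 < m} {r : σ →₀ ℕ}

theorem coeff_contract (p : MvPolynomial σ R) (ν : σ →₀ ℕ) :
    coeff ν (contract R m hm r p) = coeff (m • ν + r) p :=
  rfl

theorem contract_mul_monomial (hr : ∀ i, r i < m) (c : MvPolynomial σ R) (μ : σ →₀ ℕ) (a : R) :
    contract R m hm r (c * monomial (m • μ) a) = contract R m hm r c * monomial μ a := by
  ext ν
  simp only [coeff_contract, coeff_mul_monomial', Finsupp.smul_le_smul_add_iff hr]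
  split_ifs with h
  · congr 2
    ext i
    have := Nat.mul_le_mul_left m (h i)
    simp only [Finsupp.tsub_apply, Finsupp.add_apply, Finsupp.smul_apply, smul_eq_mul]
    rw [Nat.mul_sub]
    omega
  · rfl

theorem contract_mul_expand (hr : ∀ i, r i < m) (c q : MvPolynomial σ R) :
    contract R m hm r (c * expand m q) = contract R m hm r c * q := by
  induction q using MvPolynomial.induction_on' with
  | monomial μ a => rw [expand_monomial, contract_mul_monomial hr]
  | add p q hp hq => rw [map_add, mul_add, map_add, hp, hq, mul_add]

theorem contract_mul_mem_span_of_mem_span_expand (hr : ∀ i, r i < m)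
    {S : Set (MvPolynomial σ R)} {p : MvPolynomial σ R} (hp : p ∈ Ideal.span (expand m '' S))
    (c : MvPolynomial σ R) : contract R m hm r (c * p) ∈ Ideal.span S := by
  induction hp using Submodule.span_induction generalizing c with
  | mem _ hq =>
    obtain ⟨q, hq, rfl⟩ := hq
    rw [contract_mul_expand hr]
    exact Ideal.mul_mem_left _ _ (Ideal.subset_span hq)
  | zero => simp
  | add x y _ _ hx hy => rw [mul_add, map_add]; exact add_mem (hx c) (hy c)
  | smul a x _ hx => rw [smul_eq_mul, ← mul_assoc]; exact hx (c * a)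

theorem contract_mem_span_of_mem_span_expand (hr : ∀ i, r i < m) {S : Set (MvPolynomial σ R)}
    {p : MvPolynomial σ R} (hp : p ∈ Ideal.span (expand m '' S)) :
    contract R m hm r p ∈ Ideal.span S := by
  simpa using contract_mul_mem_span_of_mem_span_expand hr hp 1

end MvPolynomial

theorem LexLE.of_strictMono {n : ℕ} {f : Fin n → ℕ → ℕ} (hf : ∀ i, StrictMono (f i))
    {ν μ : Fin n → ℕ} (h : LexLE (fun i => f i (ν i)) (fun i => f i (μ i))) : LexLE ν μ := by
  rcases h with h | ⟨i, heq, hlt⟩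
  · exact .inl (funext fun i => (hf i).injective (congrFun h i))
  · exact .inr ⟨i, fun j hj => (hf j).injective (heq j hj), (hf i).lt_iff_lt.mp hlt⟩

theorem IsLexLeading.contract {n m : ℕ} (hm : 0 < m) {P : MvPolynomial (Fin n) ℚ}
    {δ : Fin n → ℕ} (h : IsLexLeading P δ) :
    IsLexLeading
      (MvPolynomial.contract ℚ m hm (Finsupp.equivFunOnFinite.symm fun i => δ i % m) P)
      (fun i => δ i / m) := by
  have hcoeff : ∀ ν : Fin n → ℕ,
      (MvPolynomial.contract ℚ m hm (Finsupp.equivFunOnFinite.symm fun i => δ i % m) P).coeff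
        (Finsupp.equivFunOnFinite.symm ν) =
      P.coeff (Finsupp.equivFunOnFinite.symm fun i => m * ν i + δ i % m) := by
    intro ν
    rw [MvPolynomial.coeff_contract]
    congr 1
    ext i
    simp
  have hδ : (fun i => m * (δ i / m) + δ i % m) = δ := funext fun i => Nat.div_add_mod (δ i) m
  refine ⟨by rw [hcoeff, hδ]; exact h.1, fun ν hν => ?_⟩
  rw [hcoeff] at hν
  refine LexLE.of_strictMono (f := fun i k => m * k + δ i % m)
    (fun i => (strictMono_mul_left_of_pos hm).add_const _) ?_
  simpa only [hδ] using h.2 _ hν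

theorem stmt4_general (n m : ℕ) (hm : 1 ≤ m)
    (S : Set (MvPolynomial (Fin n) ℚ))
    (P : MvPolynomial (Fin n) ℚ)
    (hP : P ∈ Ideal.span
      ((fun Q => aeval (fun i => (X i : MvPolynomial (Fin n) ℚ) ^ m) Q) '' S))
    (δP : Fin n → ℕ) (hδP : IsLexLeading P δP) :
    ∃ Q ∈ Ideal.span S, Q ≠ 0 ∧
      ∃ δQ : Fin n → ℕ, IsLexLeading Q δQ ∧ ∀ i, m * δQ i ≤ δP i := by
  set Q := MvPolynomial.contract ℚ m hm (Finsupp.equivFunOnFinite.symm fun i => δP i % m) P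
  have hQ : IsLexLeading Q (fun i => δP i / m) := hδP.contract hm
  have hP' : P ∈ Ideal.span (expand m '' S) := hP
  have hQS : Q ∈ Ideal.span S :=
    contract_mem_span_of_mem_span_expand (fun i => Nat.mod_lt (δP i) hm) hP'
  exact ⟨Q, hQS, fun h0 => hQ.1 (by rw [h0, coeff_zero]), _, hQ, fun i => Nat.mul_div_le (δP i) m⟩

theorem stmt4 (n m : ℕ) (hn : 1 ≤ n) (hm : 1 ≤ m)
    (S : Set (MvPolynomial (Fin n) ℚ))
    (P : MvPolynomial (Fin n) ℚ)
    (hP : P ∈ Ideal.span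
      ((fun Q => aeval (fun i => (X i : MvPolynomial (Fin n) ℚ) ^ m) Q) '' S))
    (hP0 : P ≠ 0) (δP : Fin n → ℕ) (hδP : IsLexLeading P δP) :
    ∃ Q ∈ Ideal.span S, Q ≠ 0 ∧
      ∃ δQ : Fin n → ℕ, IsLexLeading Q δQ ∧ ∀ i, m * δQ i ≤ δP i :=
  stmt4_general n m hm S P hP δP hδP
end

section
/- Let n ≥ 1, m ≥ 1 and ν ∈ ℕ^n. The following are equivalent: (i) there is no transdiagonal vector ε ∈ ℕ^n with m·ε_i ≤ ν_i for all i; (ii) the vector (⌊ν_1/m⌋, …, ⌊ν_n/m⌋) is Dyck; (iii) there exist a Dyck vector η ∈ ℕ^n and a vector α ∈ ℕ^n with 0 ≤ α_i < m for all i such that ν = m·η + α. -/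
/-- A vector `ν ∈ ℕ^n` is Dyck if `ν₁ + ⋯ + νᵢ ≤ i - 1` for all `1 ≤ i ≤ n`
(0-indexed: the sum of the entries up to index `i` is at most `i`). -/
def IsDyck {n : ℕ} (ν : Fin n → ℕ) : Prop :=
  ∀ i : Fin n, (∑ j ∈ Finset.univ.filter (fun j => j ≤ i), ν j) ≤ (i : ℕ)

theorem stmt6 (n m : ℕ) (hn : 1 ≤ n) (hm : 1 ≤ m) (ν : Fin n → ℕ) :
    ((¬ ∃ ε : Fin n → ℕ, ¬ IsDyck ε ∧ ∀ i, m * ε i ≤ ν i) ↔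
      IsDyck (fun i => ν i / m)) ∧
    (IsDyck (fun i => ν i / m) ↔
      ∃ η α : Fin n → ℕ, IsDyck η ∧ (∀ i, α i < m) ∧ ν = fun i => m * η i + α i) := by
  have hm' : 0 < m := hm
  constructor
  · constructor
    · intro h
      by_contra hd
      exact h ⟨fun i => ν i / m, hd, fun i => by
        rw [mul_comm]; exact Nat.div_mul_le_self _ _⟩
    · rintro hd ⟨ε, hεnot, hεle⟩
      apply hεnot
      intro i
      calc (∑ j ∈ Finset.univ.filter (fun j => j ≤ i), ε j)
          ≤ (∑ j ∈ Finset.univ.filter (fun j => j ≤ i), ν j / m) := by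
            apply Finset.sum_le_sum
            intro j _
            exact (Nat.le_div_iff_mul_le hm').2 (by rw [mul_comm]; exact hεle j)
        _ ≤ (i : ℕ) := hd i
  · constructor
    · intro hd
      exact ⟨fun i => ν i / m, fun i => ν i % m, hd, fun i => Nat.mod_lt _ hm',
        funext fun i => (Nat.div_add_mod (ν i) m).symm⟩
    · rintro ⟨η, α, hη, hα, rfl⟩
      intro i
      have : ∀ j, (m * η j + α j) / m = η j := fun j => by
        rw [Nat.mul_add_div hm', Nat.div_eq_of_lt (hα j), add_zero]
      simpa [this] using hη i
end

section
/- Let n ≥ 1. For every integer k with 0 ≤ k ≤ n − 1, the number of Dyck vectors ν ∈ ℕ^n with ν_1 + ⋯ + ν_n = k equals ((n−k)/(n+k))·binom(n+k,k) (an integer, equal to binom(n+k,k) − binom(n+k,k−1)); and for k ≥ n this number is 0. -/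
/-!
Write `D(n, k)` for the number of Dyck vectors of length `n` and sum `k`. Dropping the last entry
of such a vector of length `n + 1` and sum `k ≤ n` leaves an arbitrary Dyck vector of length `n`
and sum `j ≤ k`, so `D(n + 1, k) = ∑_{j ≤ k} D(n, j)`. Through the hockey-stick identity this
recursion gives `D(n + 1, k + 1) = C(k + n + 1, n) - C(k + n + 1, n + 1)` for `k ≤ n`; on the
diagonal `k = n` both sides vanish, since `C(2n + 1, n) = C(2n + 1, n + 1)`. That difference is
`(n - k) / (n + k + 2) · C(n + k + 2, k + 1)`.
-/

open Finset

instance {n : ℕ} : DecidablePred (IsDyck (n := n)) := fun _ ↦ by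
  unfold IsDyck; infer_instance

section

variable {n k : ℕ}

lemma isDyck_iff_sum_Iic {ν : Fin n → ℕ} : IsDyck ν ↔ ∀ i, ∑ j ∈ Iic i, ν j ≤ i := by
  simp only [IsDyck, filter_ge_eq_Iic]

lemma isDyck_snoc_iff {ν : Fin n → ℕ} {m : ℕ} :
    IsDyck (Fin.snoc ν m : Fin (n + 1) → ℕ) ↔ IsDyck ν ∧ ∑ i, ν i + m ≤ n := by
  have hlast : Iic (Fin.last n) = univ := Iic_top
  simp [isDyck_iff_sum_Iic, Fin.forall_fin_succ', Fin.sum_Iic_castSucc, hlast,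
    Fin.sum_univ_castSucc]

lemma IsDyck.sum_le {ν : Fin (n + 1) → ℕ} (h : IsDyck ν) : ∑ i, ν i ≤ n := by
  rw [← Fin.snoc_init_self ν, isDyck_snoc_iff] at h
  simpa [Fin.sum_univ_castSucc, Fin.init] using h.2

def dyckVectors (n k : ℕ) : Finset (Fin n → ℕ) :=
  (Nat.antidiagonalTuple n k).filter IsDyck

@[simp]
lemma mem_dyckVectors {ν : Fin n → ℕ} : ν ∈ dyckVectors n k ↔ IsDyck ν ∧ ∑ i, ν i = k := by
  simp [dyckVectors, Nat.mem_antidiagonalTuple, and_comm]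

lemma dyckVectors_eq_empty (hk : n < k) : dyckVectors (n + 1) k = ∅ :=
  eq_empty_of_forall_notMem fun _ hν ↦ by
    obtain ⟨hdyck, hsum⟩ := mem_dyckVectors.1 hν
    have := hdyck.sum_le
    omega

lemma card_dyckVectors_zero (n : ℕ) : #(dyckVectors n 0) = 1 := by
  rw [card_eq_one]
  refine ⟨0, eq_singleton_iff_unique_mem.2 ⟨by simp [IsDyck], fun ν hν ↦ ?_⟩⟩
  funext i
  exact sum_eq_zero_iff.1 (mem_dyckVectors.1 hν).2 i (mem_univ i)

lemma card_dyckVectors_succ (hk : k ≤ n) :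
    #(dyckVectors (n + 1) k) = ∑ j ∈ range (k + 1), #(dyckVectors n j) := by
  rw [← card_sigma]
  refine card_nbij' (fun ν ↦ ⟨∑ i, Fin.init ν i, Fin.init ν⟩) (fun p ↦ Fin.snoc p.2 (k - p.1))
    ?_ ?_ ?_ ?_
  · intro ν hν
    rw [mem_coe, mem_dyckVectors, ← Fin.snoc_init_self ν, isDyck_snoc_iff,
      Fin.sum_univ_castSucc] at hν
    simp only [Fin.snoc_castSucc, Fin.snoc_last] at hν
    simp only [coe_sigma, Set.mem_sigma_iff, coe_range, Set.mem_Iio, mem_coe, mem_dyckVectors]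
    exact ⟨by omega, hν.1.1, trivial⟩
  · rintro ⟨j, w⟩ hp
    simp only [coe_sigma, Set.mem_sigma_iff, coe_range, Set.mem_Iio, mem_coe,
      mem_dyckVectors] at hp ⊢
    rw [isDyck_snoc_iff, Fin.sum_univ_castSucc]
    simp only [Fin.snoc_castSucc, Fin.snoc_last]
    exact ⟨⟨hp.2.1, by omega⟩, by omega⟩
  · intro ν hν
    rw [mem_coe, mem_dyckVectors, Fin.sum_univ_castSucc] at hν
    change Fin.snoc (Fin.init ν) (k - ∑ i : Fin n, ν i.castSucc) = ν
    rw [show k - ∑ i : Fin n, ν i.castSucc = ν (Fin.last n) by omega, Fin.snoc_init_self]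
  · rintro ⟨j, w⟩ hp
    simp only [coe_sigma, Set.mem_sigma_iff, mem_coe, mem_dyckVectors] at hp
    simp [Fin.init_snoc, hp.2.2]

lemma card_dyckVectors_succ_succ_add_choose (hk : k ≤ n) :
    #(dyckVectors (n + 1) (k + 1)) + (k + n + 1).choose (n + 1) = (k + n + 1).choose n := by
  induction n generalizing k with
  | zero => simp_all [dyckVectors_eq_empty]
  | succ n ih =>
    obtain rfl | hk := hk.eq_or_lt
    · rw [dyckVectors_eq_empty (by omega), card_empty, zero_add, ← two_mul, Nat.choose_symm_half]
    have hsum : ∑ j ∈ range (k + 1), #(dyckVectors (n + 1) (j + 1))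
        + ∑ j ∈ range (k + 1), (j + (n + 1)).choose (n + 1)
        = ∑ j ∈ range (k + 1), (j + (n + 1)).choose n := by
      rw [← sum_add_distrib]
      exact sum_congr rfl fun j hj ↦ ih (by simp at hj; omega)
    calc #(dyckVectors (n + 1 + 1) (k + 1)) + (k + (n + 1) + 1).choose (n + 1 + 1)
        = 1 + ∑ j ∈ range (k + 1), #(dyckVectors (n + 1) (j + 1))
          + ∑ j ∈ range (k + 1), (j + (n + 1)).choose (n + 1) := by
          rw [card_dyckVectors_succ (by omega), sum_range_succ', card_dyckVectors_zero,
            Nat.sum_range_add_choose]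
          ring
      _ = ∑ j ∈ range (k + 1 + 1), (j + n).choose n := by
          rw [add_assoc, hsum, sum_range_succ' _ (k + 1)]
          simp only [zero_add, Nat.choose_self, add_comm 1, add_assoc]
      _ = (k + (n + 1) + 1).choose (n + 1) := by
          rw [Nat.sum_range_add_choose]
          ring_nf

lemma card_dyckVectors_eq (hk : k < n) :
    (#(dyckVectors n k) : ℚ) = (n - k) / (n + k) * (n + k).choose k := by
  obtain ⟨m, rfl⟩ : ∃ m, n = m + 1 := ⟨n - 1, by omega⟩
  rcases k with _ | k
  · have : (m : ℚ) + 1 ≠ 0 := by positivity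
    simp [card_dyckVectors_zero, this]
  have hcount := card_dyckVectors_succ_succ_add_choose (n := m) (k := k) (by omega)
  have hpascal := Nat.add_one_mul_choose_eq (k + m + 1) m
  have hratio := Nat.choose_succ_right_eq (k + m + 1) m
  rw [show k + m + 1 - m = k + 1 by omega] at hratio
  rw [← Nat.choose_symm_add, show m + 1 + (k + 1) = k + m + 1 + 1 by ring]
  qify at hcount hpascal hratio
  push_cast at *
  have hpos : (m : ℚ) + 1 + (k + 1) ≠ 0 := by positivity
  field_simp
  refine mul_right_cancel₀ (by positivity : (m : ℚ) + 1 ≠ 0) ?_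
  linear_combination ((m : ℚ) + k + 2) * (m + 1) * hcount + ((m : ℚ) - k) * hpascal
    - ((m : ℚ) + k + 2) * hratio

end

theorem stmt9 (n : ℕ) (hn : 1 ≤ n) (k : ℕ) :
    {ν : Fin n → ℕ | IsDyck ν ∧ ∑ i, ν i = k}.Finite ∧
    (k ≤ n - 1 →
      (({ν : Fin n → ℕ | IsDyck ν ∧ ∑ i, ν i = k}.ncard : ℚ) =
        ((n : ℚ) - k) / ((n : ℚ) + k) * ((n + k).choose k : ℚ))) ∧
    (n ≤ k → {ν : Fin n → ℕ | IsDyck ν ∧ ∑ i, ν i = k}.ncard = 0) := by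
  have hset : {ν : Fin n → ℕ | IsDyck ν ∧ ∑ i, ν i = k} = dyckVectors n k := by
    ext; simp
  obtain ⟨m, rfl⟩ : ∃ m, n = m + 1 := ⟨n - 1, by omega⟩
  refine ⟨hset ▸ (dyckVectors _ k).finite_toSet, fun hk ↦ ?_, fun hk ↦ ?_⟩
  · rw [hset, Set.ncard_coe_finset, card_dyckVectors_eq (by omega)]
  · rw [hset, dyckVectors_eq_empty hk, coe_empty, Set.ncard_empty]
end
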